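/- Let 0 < α < n, 1 < r < n/α, 1/q = 1/r − α/n, and b locally integrable on ℚ_p^n. If the maximal commutator M_{α,b}^p is bounded from L^r(ℚ_p^n) to L^q(ℚ_p^n), then b ∈ BMO(ℚ_p^n). -/

import Mathlib

open MeasureTheory ENNReal

/-- The closed `p`-adic ball in `ℚ_p^n` of radius `p^γ` centered at `x`. -/
noncomputable def pBall (p : ℕ) [Fact p.Prime] (n : ℕ) (γ : ℤ) (x : Fin n → ℚ_[p]) :
    Set (Fin n → ℚ_[p]) := Metric.closedBall x ((p : ℝ) ^ γ)

/-- The `p`-adic fractional maximal function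
`M_α^p(f)(x) = sup_γ |B_γ(x)|^{α/n−1} ∫_{B_γ(x)} |f|`. -/
noncomputable def fracMax (p : ℕ) [Fact p.Prime] (n : ℕ)
    [MeasurableSpace (Fin n → ℚ_[p])] (μ : Measure (Fin n → ℚ_[p])) (α : ℝ)
    (f : (Fin n → ℚ_[p]) → ℝ) (x : Fin n → ℚ_[p]) : ENNReal :=
  ⨆ γ : ℤ, μ (pBall p n γ x) ^ (α / n - 1) *
    ∫⁻ y in pBall p n γ x, ENNReal.ofReal |f y| ∂μ

/-- The maximal commutator
`M_{α,b}^p(f)(x) = sup_γ |B_γ(x)|^{α/n−1} ∫_{B_γ(x)} |b(x)−b(y)||f(y)| dy`. -/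
noncomputable def maxComm (p : ℕ) [Fact p.Prime] (n : ℕ)
    [MeasurableSpace (Fin n → ℚ_[p])] (μ : Measure (Fin n → ℚ_[p])) (α : ℝ)
    (b f : (Fin n → ℚ_[p]) → ℝ) (x : Fin n → ℚ_[p]) : ENNReal :=
  ⨆ γ : ℤ, μ (pBall p n γ x) ^ (α / n - 1) *
    ∫⁻ y in pBall p n γ x, ENNReal.ofReal (|b x - b y| * |f y|) ∂μ

/-- The nonlinear commutator `[b, M_α^p](f) = b · M_α^p(f) − M_α^p(b f)` (as a real
number, via `ENNReal.toReal`). -/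
noncomputable def nonlinComm (p : ℕ) [Fact p.Prime] (n : ℕ)
    [MeasurableSpace (Fin n → ℚ_[p])] (μ : Measure (Fin n → ℚ_[p])) (α : ℝ)
    (b f : (Fin n → ℚ_[p]) → ℝ) (x : Fin n → ℚ_[p]) : ℝ :=
  b x * (fracMax p n μ α f x).toReal -
    (fracMax p n μ α (fun y => b y * f y) x).toReal

/-- The local fractional maximal function relative to the ball `B = B_{γ₀}(x₀)`:
`M_{α,B}^p(b)(y) = sup_{B_γ(y) ⊆ B} |B_γ(y)|^{α/n−1} ∫_{B_γ(y)} |b|`. -/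
noncomputable def localFracMax (p : ℕ) [Fact p.Prime] (n : ℕ)
    [MeasurableSpace (Fin n → ℚ_[p])] (μ : Measure (Fin n → ℚ_[p])) (α : ℝ)
    (γ₀ : ℤ) (x₀ : Fin n → ℚ_[p]) (b : (Fin n → ℚ_[p]) → ℝ)
    (y : Fin n → ℚ_[p]) : ENNReal :=
  ⨆ (γ : ℤ) (_ : pBall p n γ y ⊆ pBall p n γ₀ x₀),
    μ (pBall p n γ y) ^ (α / n - 1) *
      ∫⁻ z in pBall p n γ y, ENNReal.ofReal |b z| ∂μ

/-- The `p`-adic BMO seminorm `sup_B |B|^{−1} ∫_B |b − b_B|`. -/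
noncomputable def bmoNorm (p : ℕ) [Fact p.Prime] (n : ℕ)
    [MeasurableSpace (Fin n → ℚ_[p])] (μ : Measure (Fin n → ℚ_[p]))
    (b : (Fin n → ℚ_[p]) → ℝ) : ENNReal :=
  ⨆ (γ : ℤ) (x : Fin n → ℚ_[p]), (μ (pBall p n γ x))⁻¹ *
    ∫⁻ y in pBall p n γ x, ENNReal.ofReal |b y - ⨍ z in pBall p n γ x, b z ∂μ| ∂μ

/-!
Let `B` be a ball and `y ∈ B`. Since `ℚ_p^n` is ultrametric, `B` is also the ball of the same
radius centred at `y`, so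
`|b(y) − b_B| ≤ |B|⁻¹ ∫_B |b(y) − b(z)| dz ≤ |B|^{−α/n} M_{α,b}(χ_B)(y)`.
Integrating over `B` and applying Hölder's inequality with exponents `q`, `q'` gives
`∫_B |b − b_B| ≤ |B|^{1 − 1/r} ‖M_{α,b}(χ_B)‖_q ≤ C |B|`, because `‖χ_B‖_r = |B|^{1/r}`.
-/

open Metric

theorem one_lt_of_one_div_eq_one_div_sub {α N r q : ℝ} (hα : 0 < α) (hr : 1 < r)
    (hrN : r < N / α) (hq : 1 / q = 1 / r - α / N) : 1 < q := by
  have hr₀ : 0 < r := one_pos.trans hr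
  have hrα : r * α < N := (lt_div_iff₀ hα).mp hrN
  have hN : 0 < N := (mul_pos hr₀ hα).trans hrα
  have hαN : α / N < 1 / r := by
    rw [div_lt_div_iff₀ hN hr₀]
    linarith
  have hq₀ : 0 < 1 / q := by linarith
  have hq₁ : 1 / q < 1 := by
    have : 1 / r < 1 := (div_lt_one hr₀).mpr hr
    linarith [div_pos hα hN]
  rwa [div_lt_one (one_div_pos.mp hq₀)] at hq₁

section General

variable {X : Type*} [MeasurableSpace X] {μ : Measure X}

theorem setLIntegral_le_lintegral_rpow_mul_measure_rpow {q q' : ℝ} (hqq' : q.HolderConjugate q')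
    (f : X → ℝ≥0∞) (s : Set X) :
    ∫⁻ x in s, f x ∂μ ≤ (∫⁻ x, f x ^ q ∂μ) ^ (1 / q) * μ s ^ (1 / q') := by
  -- `f` need not be measurable: pass to a measurable minorant with the same integral.
  obtain ⟨g, hg, hgf, hfg⟩ := exists_measurable_le_lintegral_eq (μ.restrict s) f
  have hHolder := ENNReal.lintegral_mul_le_Lp_mul_Lq (μ.restrict s) hqq' hg.aemeasurable
    (aemeasurable_const (b := (1 : ℝ≥0∞)))
  simp only [Pi.mul_apply, mul_one, one_rpow, lintegral_const, Measure.restrict_apply_univ,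
    one_mul] at hHolder
  calc ∫⁻ x in s, f x ∂μ = ∫⁻ x in s, g x ∂μ := hfg
    _ ≤ (∫⁻ x in s, g x ^ q ∂μ) ^ (1 / q) * μ s ^ (1 / q') := hHolder
    _ ≤ (∫⁻ x, f x ^ q ∂μ) ^ (1 / q) * μ s ^ (1 / q') := by
      have := hqq'.pos
      gcongr ?_ ^ _ * _
      calc ∫⁻ x in s, g x ^ q ∂μ ≤ ∫⁻ x in s, f x ^ q ∂μ :=
            lintegral_mono fun x => rpow_le_rpow (hgf x) hqq'.nonneg
        _ ≤ ∫⁻ x, f x ^ q ∂μ := setLIntegral_le_lintegral _ _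

theorem ofReal_abs_sub_setAverage_le {s : Set X} (hs₀ : μ s ≠ 0) (hs : μ s ≠ ⊤) {b : X → ℝ}
    (hb : IntegrableOn b s μ) (y : X) :
    ENNReal.ofReal |b y - ⨍ z in s, b z ∂μ| ≤
      (μ s)⁻¹ * ∫⁻ z in s, ENNReal.ofReal |b y - b z| ∂μ := by
  have hμs : 0 < μ.real s := ENNReal.toReal_pos hs₀ hs
  have hconst : IntegrableOn (fun _ => b y) s μ := integrableOn_const hs
  have hdiff : IntegrableOn (fun z => b y - b z) s μ := hconst.sub hb
  have hmean : b y - ⨍ z in s, b z ∂μ = (μ.real s)⁻¹ * ∫ z in s, (b y - b z) ∂μ := by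
    rw [setAverage_eq, integral_sub hconst hb, setIntegral_const, smul_eq_mul, smul_eq_mul]
    field_simp
  have hreal : |b y - ⨍ z in s, b z ∂μ| ≤ (μ.real s)⁻¹ * ∫ z in s, |b y - b z| ∂μ := by
    rw [hmean, abs_mul, abs_of_pos (inv_pos.mpr hμs)]
    gcongr
    exact abs_integral_le_integral_abs
  calc ENNReal.ofReal |b y - ⨍ z in s, b z ∂μ|
      ≤ ENNReal.ofReal ((μ.real s)⁻¹ * ∫ z in s, |b y - b z| ∂μ) := ofReal_le_ofReal hreal
    _ = (μ s)⁻¹ * ∫⁻ z in s, ENNReal.ofReal |b y - b z| ∂μ := by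
      rw [ENNReal.ofReal_mul (inv_nonneg.mpr hμs.le), ENNReal.ofReal_inv_of_pos hμs,
        Measure.real, ofReal_toReal hs, ofReal_integral_eq_lintegral_ofReal hdiff.abs
          (Filter.Eventually.of_forall fun z => abs_nonneg _)]

end General

section Padic

variable {p : ℕ} [Fact p.Prime] {n : ℕ}

theorem pBall_eq_of_mem {γ : ℤ} {x y : Fin n → ℚ_[p]} (hy : y ∈ pBall p n γ x) :
    pBall p n γ y = pBall p n γ x :=
  (IsUltrametricDist.closedBall_eq_of_mem hy).symm

variable [MeasurableSpace (Fin n → ℚ_[p])] {μ : Measure (Fin n → ℚ_[p])}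

theorem measure_pBall_pos [μ.IsOpenPosMeasure] (γ : ℤ) (x : Fin n → ℚ_[p]) :
    0 < μ (pBall p n γ x) :=
  measure_closedBall_pos μ x (zpow_pos (by exact_mod_cast (Fact.out : p.Prime).pos) γ)

theorem measure_pBall_ne_top [IsFiniteMeasureOnCompacts μ] (γ : ℤ) (x : Fin n → ℚ_[p]) :
    μ (pBall p n γ x) ≠ ⊤ :=
  (isCompact_closedBall x _).measure_lt_top.ne

variable [BorelSpace (Fin n → ℚ_[p])]

theorem measurableSet_pBall {γ : ℤ} {x : Fin n → ℚ_[p]} : MeasurableSet (pBall p n γ x) :=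
  measurableSet_closedBall

variable [μ.IsAddHaarMeasure] {b : (Fin n → ℚ_[p]) → ℝ}

theorem ofReal_abs_sub_setAverage_pBall_le_maxComm (hb : LocallyIntegrable b μ) (α : ℝ)
    {γ : ℤ} {x y : Fin n → ℚ_[p]} (hy : y ∈ pBall p n γ x) :
    ENNReal.ofReal |b y - ⨍ z in pBall p n γ x, b z ∂μ| ≤
      μ (pBall p n γ x) ^ (-(α / n)) *
        maxComm p n μ α b ((pBall p n γ x).indicator fun _ => 1) y := by
  set B := pBall p n γ x
  have hB₀ : μ B ≠ 0 := (measure_pBall_pos γ x).ne'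
  have hB : μ B ≠ ⊤ := measure_pBall_ne_top γ x
  have hχ : ∫⁻ z in B, ENNReal.ofReal |b y - b z| ∂μ =
      ∫⁻ z in pBall p n γ y, ENNReal.ofReal (|b y - b z| * |B.indicator (fun _ => 1) z|) ∂μ := by
    rw [pBall_eq_of_mem hy]
    refine setLIntegral_congr_fun measurableSet_pBall fun z hz => ?_
    simp [Set.indicator_of_mem hz]
  calc ENNReal.ofReal |b y - ⨍ z in B, b z ∂μ|
      ≤ (μ B)⁻¹ * ∫⁻ z in B, ENNReal.ofReal |b y - b z| ∂μ :=
        ofReal_abs_sub_setAverage_le hB₀ hB (hb.integrableOn_isCompact (isCompact_closedBall _ _)) y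
    _ = μ B ^ (-(α / n)) * (μ (pBall p n γ y) ^ (α / n - 1) *
          ∫⁻ z in pBall p n γ y, ENNReal.ofReal (|b y - b z| * |B.indicator (fun _ => 1) z|) ∂μ) := by
        rw [← hχ, pBall_eq_of_mem hy, ← mul_assoc, ← rpow_add _ _ hB₀ hB, ← rpow_neg_one]
        ring_nf
    _ ≤ μ B ^ (-(α / n)) * maxComm p n μ α b (B.indicator fun _ => 1) y :=
by
        gcongr
        exact le_iSup (fun γ' : ℤ => μ (pBall p n γ' y) ^ (α / n - 1) *
          ∫⁻ z in pBall p n γ' y, ENNReal.ofReal (|b y - b z| * |B.indicator (fun _ => 1) z|) ∂μ) γ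

theorem meanOscillation_pBall_le (hb : LocallyIntegrable b μ) {α r q : ℝ} (hq₁ : 1 < q)
    (hq : 1 / q = 1 / r - α / n) (γ : ℤ) (x : Fin n → ℚ_[p]) :
    (μ (pBall p n γ x))⁻¹ *
        ∫⁻ y in pBall p n γ x, ENNReal.ofReal |b y - ⨍ z in pBall p n γ x, b z ∂μ| ∂μ ≤
      μ (pBall p n γ x) ^ (-(1 / r)) *
        (∫⁻ y, maxComm p n μ α b ((pBall p n γ x).indicator fun _ => 1) y ^ q ∂μ) ^ (1 / q) := by
  set B := pBall p n γ x
  set M := maxComm p n μ α b (B.indicator fun _ => 1)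
  have hB₀ : μ B ≠ 0 := (measure_pBall_pos γ x).ne'
  have hB : μ B ≠ ⊤ := measure_pBall_ne_top γ x
  have hqq' := Real.HolderConjugate.conjExponent hq₁
  have hq' : 1 / q.conjExponent = 1 - 1 / q := by
    rw [one_div, one_div, ← hqq'.inv_add_inv_eq_one, add_sub_cancel_left]
  calc (μ B)⁻¹ * ∫⁻ y in B, ENNReal.ofReal |b y - ⨍ z in B, b z ∂μ| ∂μ
      ≤ (μ B)⁻¹ * ∫⁻ y in B, μ B ^ (-(α / n)) * M y ∂μ := by
        gcongr (μ B)⁻¹ * ?_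
        exact setLIntegral_mono' measurableSet_pBall fun y hy =>
          ofReal_abs_sub_setAverage_pBall_le_maxComm hb α hy
    _ = (μ B)⁻¹ * μ B ^ (-(α / n)) * ∫⁻ y in B, M y ∂μ := by
        rw [lintegral_const_mul' _ _ (rpow_ne_top_of_ne_zero hB₀ hB), mul_assoc]
    _ ≤ (μ B)⁻¹ * μ B ^ (-(α / n)) *
          ((∫⁻ y, M y ^ q ∂μ) ^ (1 / q) * μ B ^ (1 / q.conjExponent)) := by
        gcongr
        exact setLIntegral_le_lintegral_rpow_mul_measure_rpow hqq' M B
    _ = μ B ^ (-(1 / r)) * (∫⁻ y, M y ^ q ∂μ) ^ (1 / q) := by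
        rw [← rpow_neg_one, mul_comm (_ ^ (1 / q)), ← mul_assoc, ← rpow_add _ _ hB₀ hB,
          ← rpow_add _ _ hB₀ hB, hq', hq]
        ring_nf

end Padic

theorem maxComm_bounded_implies_bmo_general (p : ℕ) [Fact p.Prime] (n : ℕ)
    [MeasurableSpace (Fin n → ℚ_[p])] [BorelSpace (Fin n → ℚ_[p])]
    (μ : Measure (Fin n → ℚ_[p])) [μ.IsAddHaarMeasure]
    (α : ℝ) (hα₀ : 0 < α)
    (b : (Fin n → ℚ_[p]) → ℝ) (hbloc : LocallyIntegrable b μ)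
    (r q : ℝ) (hr : 1 < r) (hrn : r < n / α) (hq : 1 / q = 1 / r - α / n)
    (hbound : ∃ C : ENNReal, C ≠ ⊤ ∧
      ∀ f : (Fin n → ℚ_[p]) → ℝ, MemLp f (ENNReal.ofReal r) μ →
        (∫⁻ x, maxComm p n μ α b f x ^ q ∂μ) ^ (1 / q) ≤
          C * eLpNorm f (ENNReal.ofReal r) μ) :
    bmoNorm p n μ b ≠ ⊤ := by
  obtain ⟨C, hC_ne_top, hC⟩ := hbound
  have hq₁ : 1 < q := one_lt_of_one_div_eq_one_div_sub hα₀ hr hrn hq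
  refine ne_top_of_le_ne_top hC_ne_top (iSup₂_le fun γ x => ?_)
  set B := pBall p n γ x
  have hB₀ : μ B ≠ 0 := (measure_pBall_pos γ x).ne'
  have hB : μ B ≠ ⊤ := measure_pBall_ne_top γ x
  have hχ : eLpNorm (B.indicator fun _ => (1 : ℝ)) (ENNReal.ofReal r) μ = μ B ^ (1 / r) := by
    rw [eLpNorm_indicator_const measurableSet_pBall (by simp; linarith) ofReal_ne_top,
      toReal_ofReal (by linarith)]
    simp [B]
  calc _ ≤ μ B ^ (-(1 / r)) *
          (∫⁻ y, maxComm p n μ α b (B.indicator fun _ => 1) y ^ q ∂μ) ^ (1 / q) :=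
        meanOscillation_pBall_le hbloc hq₁ hq γ x
    _ ≤ μ B ^ (-(1 / r)) * (C * μ B ^ (1 / r)) := by
        rw [← hχ]
        gcongr
        exact hC _ (memLp_indicator_const _ measurableSet_pBall 1 (Or.inr hB))
    _ = C := by
        rw [mul_left_comm, ← rpow_add _ _ hB₀ hB, neg_add_cancel, rpow_zero, mul_one]

/-- If `0 < α < n`, `1 < r < n/α`, `1/q = 1/r − α/n`, and the maximal commutator
`M_{α,b}^p` is bounded from `L^r(ℚ_p^n)` to `L^q(ℚ_p^n)`, then `b ∈ BMO(ℚ_p^n)`. -/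
theorem maxComm_bounded_implies_bmo (p : ℕ) [Fact p.Prime] (n : ℕ)
    [MeasurableSpace (Fin n → ℚ_[p])] [BorelSpace (Fin n → ℚ_[p])]
    (μ : Measure (Fin n → ℚ_[p])) [μ.IsAddHaarMeasure]
    (hμ : μ (Metric.closedBall 0 1) = 1)
    (α : ℝ) (hα₀ : 0 < α) (hαn : α < n)
    (b : (Fin n → ℚ_[p]) → ℝ) (hbloc : LocallyIntegrable b μ)
    (r q : ℝ) (hr : 1 < r) (hrn : r < n / α) (hq : 1 / q = 1 / r - α / n)
    (hbound : ∃ C : ENNReal, C ≠ ⊤ ∧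
      ∀ f : (Fin n → ℚ_[p]) → ℝ, MemLp f (ENNReal.ofReal r) μ →
        (∫⁻ x, maxComm p n μ α b f x ^ q ∂μ) ^ (1 / q) ≤
          C * eLpNorm f (ENNReal.ofReal r) μ) :
    bmoNorm p n μ b ≠ ⊤ :=
  maxComm_bounded_implies_bmo_general p n μ α hα₀ b hbloc r q hr hrn hq hbound
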